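/- For every real number z with 0 < z < 1, ∑_{n=0}^∞ 4^n z^n / ((2n+1)(n+1)(n+2)·C_n) = 1/(2z) + (1/(2z^2))·(arctan(√(z/(1−z))))^2 − arctan(√(z/(1−z))) / (z·√(z/(1−z))). -/

import Mathlib

open Real Filter Topology

lemma cb_lb (n : ℕ) : 4 ^ n ≤ (2 * n + 1) * Nat.centralBinom n := by
  induction n with
  | zero => simp [Nat.centralBinom]
  | succ n ih =>
    have h := Nat.succ_mul_centralBinom_succ n
    have hpos := Nat.centralBinom_pos n
    have key : (n+1) * 4 ^ (n+1) ≤ (n+1) * ((2*(n+1)+1) * Nat.centralBinom (n+1)) := by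
      have : (n+1) * ((2*(n+1)+1) * Nat.centralBinom (n+1))
          = (2*(n+1)+1) * ((n+1) * Nat.centralBinom (n+1)) := by ring
      rw [this, h]
      have : (n+1) * 4 ^ (n+1) = 4 * (n+1) * 4 ^ n := by ring
      rw [this]
      calc 4 * (n+1) * 4 ^ n ≤ 4 * (n+1) * ((2*n+1) * Nat.centralBinom n) :=
            Nat.mul_le_mul_left _ ih
        _ ≤ (2*(n+1)+1) * (2 * (2*n+1) * Nat.centralBinom n) := by nlinarith
    exact Nat.le_of_mul_le_mul_left key (Nat.succ_pos n)

noncomputable def cc (n : ℕ) : ℝ := 4 ^ n / ((2 * n + 1) * Nat.centralBinom n)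

lemma cb_pos (n : ℕ) : (0:ℝ) < (2 * (n:ℝ) + 1) * Nat.centralBinom n := by
  have := Nat.centralBinom_pos n
  positivity

lemma cc_pos (n : ℕ) : 0 < cc n := by
  unfold cc
  have := cb_pos n
  positivity

lemma cc_le_one (n : ℕ) : cc n ≤ 1 := by
  unfold cc
  rw [div_le_one (cb_pos n)]
  have := cb_lb n
  exact_mod_cast by exact_mod_cast Nat.cast_le.mpr this |>.trans_eq (by push_cast; ring)

lemma cc_rec (n : ℕ) : (2*(n:ℝ)+3) * cc (n+1) = (2*(n:ℝ)+2) * cc n := by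
  have h := Nat.succ_mul_centralBinom_succ n
  have h' : ((n:ℝ)+1) * (Nat.centralBinom (n+1) : ℝ) = 2 * (2*(n:ℝ)+1) * (Nat.centralBinom n : ℝ) := by
    exact_mod_cast h
  have hb := Nat.centralBinom_pos n
  have hb' := Nat.centralBinom_pos (n+1)
  have hb0 : (Nat.centralBinom n : ℝ) ≠ 0 := by positivity
  have hb0' : (Nat.centralBinom (n+1) : ℝ) ≠ 0 := by positivity
  unfold cc
  push_cast
  field_simp
  linear_combination (-2*(4:ℝ)^n*(2*(n:ℝ)+3)) * h'

noncomputable def PP (x : ℝ) : ℝ := ∑' n, cc n * x ^ n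
noncomputable def TT (x : ℝ) : ℝ := ∑' n, cc n / (n + 2) * x ^ (n + 2)

lemma abs_cc (n : ℕ) : ‖cc n‖ = cc n := abs_of_pos (cc_pos n)

lemma summable_P {x : ℝ} (hx0 : 0 ≤ x) (hx1 : x < 1) : Summable (fun n => cc n * x ^ n) := by
  refine Summable.of_nonneg_of_le (fun n => mul_nonneg (cc_pos n).le (pow_nonneg hx0 n))
    (fun n => mul_le_of_le_one_left (pow_nonneg hx0 n) (cc_le_one n))
    (summable_geometric_of_lt_one hx0 hx1)

lemma summable_geom' {x : ℝ} (hx0 : 0 ≤ x) (hx1 : x < 1) :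
    Summable (fun n : ℕ => ((n:ℝ) + 1) * x ^ n) := by
  have h1 : Summable (fun n : ℕ => (n:ℝ) ^ 1 * x ^ n) :=
    summable_pow_mul_geometric_of_norm_lt_one 1
      (by rwa [Real.norm_eq_abs, abs_of_nonneg hx0])
  refine (h1.add (summable_geometric_of_lt_one hx0 hx1)).congr fun n => by push_cast; ring

lemma summable_nP {x : ℝ} (hx0 : 0 ≤ x) (hx1 : x < 1) :
    Summable (fun n : ℕ => (n:ℝ) * cc n * x ^ n) := by
  refine Summable.of_nonneg_of_le
    (fun n => mul_nonneg (mul_nonneg n.cast_nonneg (cc_pos n).le) (pow_nonneg hx0 n))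
    (fun n => ?_) (summable_geom' hx0 hx1)
  have h1 : (n:ℝ) * cc n ≤ (n:ℝ) + 1 := by
    nlinarith [cc_pos n, cc_le_one n, (n.cast_nonneg : (0:ℝ) ≤ (n:ℝ))]
  exact mul_le_mul_of_nonneg_right h1 (pow_nonneg hx0 n)

lemma summable_dP {x : ℝ} (hx0 : 0 ≤ x) (hx1 : x < 1) :
    Summable (fun n : ℕ => cc n * ((n:ℝ) * x ^ (n - 1))) := by
  refine (summable_nat_add_iff 1).mp ?_
  refine Summable.of_nonneg_of_le
    (fun n => mul_nonneg (cc_pos _).le (mul_nonneg (by positivity) (pow_nonneg hx0 _)))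
    (fun n => ?_) (summable_geom' hx0 hx1)
  simp only [Nat.add_sub_cancel]
  push_cast
  exact mul_le_of_le_one_left (by positivity) (cc_le_one _)



lemma summable_nr {r : ℝ} (hr0 : 0 ≤ r) (hr1 : r < 1) :
    Summable (fun n : ℕ => (n:ℝ) * r ^ (n - 1)) := by
  refine (summable_nat_add_iff 1).mp ?_
  refine (summable_geom' hr0 hr1).congr fun n => ?_
  simp only [Nat.add_sub_cancel]
  push_cast
  ring

lemma hasDerivAt_PP {x : ℝ} (hx0 : 0 < x) (hx1 : x < 1) :
    HasDerivAt PP (∑' n, cc n * ((n:ℝ) * x ^ (n - 1))) x := by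
  set r : ℝ := (1 + x) / 2 with hr
  have hr0 : 0 < r := by positivity
  have hrx : x < r := by rw [hr]; linarith
  have hr1 : r < 1 := by rw [hr]; linarith
  have := hasDerivAt_tsum_of_isPreconnected
    (u := fun n : ℕ => (n:ℝ) * r ^ (n - 1))
    (g := fun n y => cc n * y ^ n)
    (g' := fun n y => cc n * ((n:ℝ) * y ^ (n - 1)))
    (t := Set.Ioo (-r) r) (y₀ := x) (y := x)
    (summable_nr hr0.le hr1) isOpen_Ioo (convex_Ioo _ _).isPreconnected
    (fun n y _ => (hasDerivAt_pow n y).const_mul (cc n))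
    (fun n y hy => ?_) ⟨by linarith, hrx⟩ (summable_P hx0.le hx1) ⟨by linarith, hrx⟩
  · exact this
  · have hyr : |y| < r := abs_lt.mpr ⟨hy.1, hy.2⟩
    rw [norm_mul, norm_mul, norm_pow, abs_cc, Real.norm_natCast, Real.norm_eq_abs]
    calc cc n * ((n:ℝ) * |y| ^ (n-1)) ≤ 1 * ((n:ℝ) * r ^ (n-1)) := by
          have : |y| ^ (n-1) ≤ r ^ (n-1) := pow_le_pow_left₀ (abs_nonneg y) hyr.le _
          have h2 : (n:ℝ) * |y| ^ (n-1) ≤ (n:ℝ) * r ^ (n-1) :=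
            mul_le_mul_of_nonneg_left this n.cast_nonneg
          have h3 := cc_le_one n
          nlinarith [cc_pos n, mul_nonneg (n.cast_nonneg : (0:ℝ) ≤ n) (pow_nonneg (abs_nonneg y) (n-1))]
      _ = (n:ℝ) * r ^ (n-1) := one_mul _

lemma summable_T {x : ℝ} (hx0 : 0 ≤ x) (hx1 : x < 1) :
    Summable (fun n : ℕ => cc n / ((n:ℝ) + 2) * x ^ (n + 2)) := by
  refine Summable.of_nonneg_of_le
    (fun n => mul_nonneg (div_nonneg (cc_pos n).le (by positivity)) (pow_nonneg hx0 _))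
    (fun n => ?_) (summable_geometric_of_lt_one hx0 hx1)
  calc cc n / ((n:ℝ)+2) * x ^ (n+2) ≤ 1 * x ^ (n+2) := by
        have h1 : cc n / ((n:ℝ)+2) ≤ 1 := by
          rw [div_le_one (by positivity)]
          have := cc_le_one n
          have : (0:ℝ) ≤ (n:ℝ) := n.cast_nonneg
          linarith [cc_le_one n]
        exact mul_le_mul_of_nonneg_right h1 (pow_nonneg hx0 _)
    _ = x ^ (n+2) := one_mul _
    _ ≤ x ^ n := pow_le_pow_of_le_one hx0 hx1.le (by omega)

lemma summable_T' {x : ℝ} (hx0 : 0 ≤ x) (hx1 : x < 1) :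
    Summable (fun n : ℕ => cc n * x ^ (n + 1)) := by
  refine Summable.of_nonneg_of_le
    (fun n => mul_nonneg (cc_pos n).le (pow_nonneg hx0 _))
    (fun n => ?_) (summable_geometric_of_lt_one hx0 hx1)
  calc cc n * x ^ (n+1) ≤ 1 * x ^ (n+1) :=
        mul_le_mul_of_nonneg_right (cc_le_one n) (pow_nonneg hx0 _)
    _ = x ^ (n+1) := one_mul _
    _ ≤ x ^ n := pow_le_pow_of_le_one hx0 hx1.le (by omega)

lemma hasDerivAt_TT {x : ℝ} (hx0 : 0 < x) (hx1 : x < 1) :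
    HasDerivAt TT (∑' n, cc n * x ^ (n + 1)) x := by
  set r : ℝ := (1 + x) / 2 with hr
  have hr0 : 0 < r := by positivity
  have hrx : x < r := by rw [hr]; linarith
  have hr1 : r < 1 := by rw [hr]; linarith
  have := hasDerivAt_tsum_of_isPreconnected
    (u := fun n : ℕ => r ^ (n + 1))
    (g := fun n y => cc n / ((n:ℝ) + 2) * y ^ (n + 2))
    (g' := fun n y => cc n * y ^ (n + 1))
    (t := Set.Ioo (-r) r) (y₀ := x) (y := x)
    ?_ isOpen_Ioo (convex_Ioo _ _).isPreconnected
    (fun n y _ => ?_) (fun n y hy => ?_) ⟨by linarith, hrx⟩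
    (summable_T hx0.le hx1) ⟨by linarith, hrx⟩
  · exact this
  · exact ((summable_geometric_of_lt_one hr0.le hr1).mul_left r).congr
      fun n => by rw [← pow_succ']
  · have h := (hasDerivAt_pow (n + 2) y).const_mul (cc n / ((n:ℝ) + 2))
    refine h.congr_deriv (Eq.symm ?_)
    have h2 : ((n:ℝ) + 2) ≠ 0 := by positivity
    push_cast
    field_simp
  · have hyr : |y| < r := abs_lt.mpr ⟨hy.1, hy.2⟩
    rw [norm_mul, norm_pow, abs_cc, Real.norm_eq_abs]
    calc cc n * |y| ^ (n+1) ≤ 1 * r ^ (n+1) := by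
          have h1 : |y| ^ (n+1) ≤ r ^ (n+1) := pow_le_pow_left₀ (abs_nonneg y) hyr.le _
          nlinarith [cc_pos n, cc_le_one n, pow_nonneg (abs_nonneg y) (n+1)]
      _ = r ^ (n+1) := one_mul _

lemma cc_zero : cc 0 = 1 := by
  simp [cc, Nat.centralBinom]

lemma tsum_shift_eq {x : ℝ} (hx0 : 0 < x) (hx1 : x < 1) :
    x * (∑' n, cc n * ((n:ℝ) * x ^ (n - 1))) = ∑' n : ℕ, (n:ℝ) * cc n * x ^ n := by
  rw [← tsum_mul_left]
  refine tsum_congr fun n => ?_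
  cases n with
  | zero => simp
  | succ n =>
    simp only [Nat.add_sub_cancel]
    push_cast
    ring

lemma ode {x : ℝ} (hx0 : 0 < x) (hx1 : x < 1) :
    (1 - 2*x) * PP x + 2*x*(1-x) * (∑' n, cc n * ((n:ℝ) * x ^ (n - 1))) = 1 := by
  set d : ℕ → ℝ := fun n => (2*(n:ℝ)+1) * cc n * x ^ n with hd_def
  have h1 := summable_nP hx0.le hx1
  have h2 := summable_P hx0.le hx1
  have hd : Summable d := ((h1.mul_left 2).add h2).congr fun n => by
    simp only [hd_def]; ring
  have hd1 : Summable (fun n => d (n + 1)) := (summable_nat_add_iff 1).mpr hd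
  have hs : Summable (fun n => d n - d (n + 1)) := hd.sub hd1
  -- telescoping
  have htel : ∑' n, (d n - d (n + 1)) = d 0 := by
    have ht1 : Filter.Tendsto (fun N => ∑ i ∈ Finset.range N, (d i - d (i+1)))
        Filter.atTop (nhds (∑' n, (d n - d (n + 1)))) := hs.hasSum.tendsto_sum_nat
    have ht2 : Filter.Tendsto (fun N => ∑ i ∈ Finset.range N, (d i - d (i+1)))
        Filter.atTop (nhds (d 0)) := by
      have : ∀ N, ∑ i ∈ Finset.range N, (d i - d (i+1)) = d 0 - d N :=
        fun N => Finset.sum_range_sub' d N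
      simp only [this]
      simpa using Filter.Tendsto.const_sub (d 0) hd.tendsto_atTop_zero
    exact tendsto_nhds_unique ht1 ht2
  have hd0 : d 0 = 1 := by simp [hd_def, cc_zero]
  -- d (n+1) = (2n+2) * cc n * x^(n+1)
  have hshift : ∀ n : ℕ, d (n + 1) = (2*(n:ℝ)+2) * cc n * x ^ (n+1) := by
    intro n
    have := cc_rec n
    simp only [hd_def]
    push_cast
    nlinarith [this, pow_nonneg hx0.le (n+1)]
  -- split tsums
  have e1 : ∑' n, d n = 2 * (∑' n : ℕ, (n:ℝ) * cc n * x ^ n) + PP x := by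
    have h : ∑' n, d n = ∑' n : ℕ, (2 * ((n:ℝ) * cc n * x ^ n) + cc n * x ^ n) :=
      tsum_congr fun n => by simp only [hd_def]; ring
    rw [h, Summable.tsum_add (h1.mul_left 2) h2, tsum_mul_left, PP]
  have e2 : ∑' n, d (n + 1)
      = 2 * x * (∑' n : ℕ, (n:ℝ) * cc n * x ^ n) + 2 * x * PP x := by
    have h : ∑' n, d (n+1) = ∑' n : ℕ, (2 * x * ((n:ℝ) * cc n * x ^ n) + 2 * x * (cc n * x ^ n)) :=
      tsum_congr fun n => by rw [hshift n, pow_succ]; ring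
    rw [h, Summable.tsum_add (h1.mul_left (2*x)) (h2.mul_left (2*x)), tsum_mul_left, tsum_mul_left, PP]
  have e3 := Summable.tsum_sub hd hd1
  rw [htel, hd0] at e3
  have e4 := tsum_shift_eq hx0 hx1
  set A := ∑' n : ℕ, (n:ℝ) * cc n * x ^ n
  set D := ∑' n, cc n * ((n:ℝ) * x ^ (n - 1))
  have key : (1:ℝ) = (2 * A + PP x) - (2 * x * A + 2 * x * PP x) := by
    rw [← e1, ← e2]; exact e3
  linear_combination (-1) * key + 2*(1-x) * e4

lemma hasDerivAt_w {x : ℝ} (hx0 : 0 < x) (hx1 : x < 1) :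
    HasDerivAt (fun y => Real.sqrt (y - y ^ 2))
      ((1 - 2*x) / (2 * Real.sqrt (x - x ^ 2))) x := by
  have hin : HasDerivAt (fun y : ℝ => y - y ^ 2) (1 - 2*x) x := by
    have h1 := (hasDerivAt_id x).sub (hasDerivAt_pow 2 x)
    refine h1.congr_deriv (Eq.symm ?_)
    push_cast
    ring
  have hne : x - x ^ 2 ≠ 0 := by nlinarith
  exact hin.sqrt hne

lemma hasDerivAt_arc {x : ℝ} (hx0 : 0 < x) (hx1 : x < 1) :
    HasDerivAt (fun y => Real.arcsin (Real.sqrt y))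
      (1 / (2 * Real.sqrt (x - x ^ 2))) x := by
  have hs0 : 0 < Real.sqrt x := Real.sqrt_pos.mpr hx0
  have hs1 : Real.sqrt x < 1 := by
    rw [show (1:ℝ) = Real.sqrt 1 by simp]
    exact Real.sqrt_lt_sqrt hx0.le hx1
  have h1 : Real.sqrt x ≠ -1 := by linarith
  have h2 : Real.sqrt x ≠ 1 := by linarith
  have ha := Real.hasDerivAt_arcsin h1 h2
  have hsq := Real.hasDerivAt_sqrt (ne_of_gt hx0)
  have hc := ha.comp x hsq
  refine hc.congr_deriv (Eq.symm ?_)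
  have e1 : Real.sqrt x ^ 2 = x := Real.sq_sqrt hx0.le
  have e2 : Real.sqrt (x - x ^ 2) = Real.sqrt x * Real.sqrt (1 - x) := by
    rw [← Real.sqrt_mul hx0.le]
    ring_nf
  rw [e1, e2]
  have h3 : 0 < Real.sqrt (1 - x) := Real.sqrt_pos.mpr (by linarith)
  field_simp

lemma PP_nonneg {y : ℝ} (hy : 0 ≤ y) : 0 ≤ PP y :=
  tsum_nonneg fun n => mul_nonneg (cc_pos n).le (pow_nonneg hy n)

lemma PP_le_two {y : ℝ} (hy0 : 0 ≤ y) (hy1 : y ≤ 1/2) : PP y ≤ 2 := by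
  have h1 : PP y ≤ ∑' n : ℕ, (1/2 : ℝ) ^ n := by
    refine Summable.tsum_le_tsum (fun n => ?_) (summable_P hy0 (by linarith))
      (summable_geometric_of_lt_one (by norm_num) (by norm_num))
    calc cc n * y ^ n ≤ 1 * (1/2) ^ n := by
          have := pow_le_pow_left₀ hy0 hy1 n
          nlinarith [cc_pos n, cc_le_one n, pow_nonneg hy0 n]
      _ = (1/2) ^ n := one_mul _
  rw [tsum_geometric_of_lt_one (by norm_num) (by norm_num)] at h1
  norm_num at h1
  exact h1

lemma P_eq {x : ℝ} (hx0 : 0 < x) (hx1 : x < 1) :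
    Real.sqrt (x - x ^ 2) * PP x = Real.arcsin (Real.sqrt x) := by
  set q : ℝ → ℝ := fun y => Real.sqrt (y - y ^ 2) * PP y - Real.arcsin (Real.sqrt y) with hq
  have hq0 : ∀ y ∈ Set.Ioo (0:ℝ) 1, HasDerivAt q 0 y := by
    rintro y ⟨hy0, hy1⟩
    have hw := hasDerivAt_w hy0 hy1
    have hp := hasDerivAt_PP hy0 hy1
    have ha := hasDerivAt_arc hy0 hy1
    have h := (hw.mul hp).sub ha
    refine h.congr_deriv (Eq.symm ?_)
    have hode := ode hy0 hy1
    have hwpos : 0 < Real.sqrt (y - y ^ 2) := Real.sqrt_pos.mpr (by nlinarith)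
    have hw2 : Real.sqrt (y - y ^ 2) ^ 2 = y - y ^ 2 := Real.sq_sqrt (by nlinarith)
    set w := Real.sqrt (y - y ^ 2)
    set D := ∑' n, cc n * ((n:ℝ) * y ^ (n - 1))
    field_simp
    linear_combination (-1 : ℝ) * hode + (-2*D) * hw2
  -- q x = q ε for ε ∈ (0, x]
  have hconst : ∀ ε ∈ Set.Ioc (0:ℝ) x, q ε = q x := by
    rintro ε ⟨hε0, hεx⟩
    have h := constant_of_has_deriv_right_zero
      (f := q) (a := ε) (b := x)
      (fun y hy => ((hq0 y ⟨lt_of_lt_of_le hε0 hy.1, lt_of_le_of_lt hy.2 hx1⟩).continuousAt).continuousWithinAt)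
      (fun y hy => ((hq0 y ⟨lt_of_lt_of_le hε0 hy.1, lt_trans hy.2 hx1⟩).hasDerivWithinAt))
    exact (h x ⟨hεx, le_refl x⟩).symm
  -- limit of q at 0+
  have hlim : Filter.Tendsto q (nhdsWithin 0 (Set.Ioi 0)) (nhds 0) := by
    have part1 : Filter.Tendsto (fun y => Real.sqrt (y - y ^ 2) * PP y)
        (nhdsWithin 0 (Set.Ioi 0)) (nhds 0) := by
      have hg : Filter.Tendsto (fun y : ℝ => 2 * Real.sqrt y)
          (nhdsWithin 0 (Set.Ioi 0)) (nhds 0) := by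
        have := (Real.continuous_sqrt.tendsto 0).const_mul 2
        simp only [Real.sqrt_zero, mul_zero] at this
        exact this.mono_left nhdsWithin_le_nhds
      refine squeeze_zero' ?_ ?_ hg
      · filter_upwards [self_mem_nhdsWithin] with y hy
        have hy0 : 0 < y := hy
        exact mul_nonneg (Real.sqrt_nonneg _) (PP_nonneg hy0.le)
      · filter_upwards [Ioc_mem_nhdsGT_of_mem (show (0:ℝ) ∈ Set.Ico (0:ℝ) (1/2:ℝ) from ⟨le_refl _, by norm_num⟩)] with y hy
        rcases hy with ⟨hy0, hy2⟩
        have h1 : Real.sqrt (y - y ^ 2) ≤ Real.sqrt y :=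
          Real.sqrt_le_sqrt (by nlinarith)
        have h2 : PP y ≤ 2 := PP_le_two hy0.le hy2
        have h3 : 0 ≤ PP y := PP_nonneg hy0.le
        have h4 : 0 ≤ Real.sqrt y := Real.sqrt_nonneg y
        nlinarith [Real.sqrt_nonneg (y - y ^ 2)]
    have part2 : Filter.Tendsto (fun y => Real.arcsin (Real.sqrt y))
        (nhdsWithin 0 (Set.Ioi 0)) (nhds 0) := by
      have := (Real.continuous_arcsin.comp Real.continuous_sqrt).tendsto 0
      simp only [Function.comp, Real.sqrt_zero, Real.arcsin_zero] at this
      exact this.mono_left nhdsWithin_le_nhds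
    have := part1.sub part2
    simpa using this
  have hconst' : Filter.Tendsto q (nhdsWithin 0 (Set.Ioi 0)) (nhds (q x)) := by
    have hev : q =ᶠ[nhdsWithin 0 (Set.Ioi 0)] fun _ => q x := by
      filter_upwards [Ioc_mem_nhdsGT_of_mem (Set.mem_Ico.mpr ⟨le_refl 0, hx0⟩)] with ε hε
      exact hconst ε hε
    exact (Filter.Tendsto.congr' hev.symm tendsto_const_nhds)
  have : q x = 0 := tendsto_nhds_unique hconst' hlim
  have := this
  simp only [hq] at this
  linarith [this]

lemma TT_nonneg {y : ℝ} (hy : 0 ≤ y) : 0 ≤ TT y :=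
  tsum_nonneg fun n =>
    mul_nonneg (div_nonneg (cc_pos n).le (by positivity)) (pow_nonneg hy _)

lemma TT_le {y : ℝ} (hy0 : 0 ≤ y) (hy1 : y ≤ 1/2) : TT y ≤ 2 * y ^ 2 := by
  have h1 : TT y ≤ ∑' n : ℕ, y ^ 2 * (1/2 : ℝ) ^ n := by
    refine Summable.tsum_le_tsum (fun n => ?_) (summable_T hy0 (by linarith))
      ((summable_geometric_of_lt_one (by norm_num) (by norm_num)).mul_left _)
    have e : y ^ (n + 2) = y ^ 2 * y ^ n := by rw [pow_add]; ring
    rw [e]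
    have h2 : cc n / ((n:ℝ)+2) ≤ 1 := by
      rw [div_le_one (by positivity)]
      have := cc_le_one n
      have h3 : (0:ℝ) ≤ (n:ℝ) := n.cast_nonneg
      linarith
    have h4 : y ^ n ≤ (1/2) ^ n := pow_le_pow_left₀ hy0 hy1 n
    have h5 : (0:ℝ) ≤ y ^ n := pow_nonneg hy0 n
    have h6 : (0:ℝ) ≤ y ^ 2 := sq_nonneg y
    calc cc n / ((n:ℝ)+2) * (y ^ 2 * y ^ n) ≤ 1 * (y ^ 2 * y ^ n) :=
          mul_le_mul_of_nonneg_right h2 (by positivity)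
      _ = y ^ 2 * y ^ n := one_mul _
      _ ≤ y ^ 2 * (1/2) ^ n := mul_le_mul_of_nonneg_left h4 h6
  rw [tsum_mul_left, tsum_geometric_of_lt_one (by norm_num) (by norm_num)] at h1
  norm_num at h1
  linarith

lemma T_eq {x : ℝ} (hx0 : 0 < x) (hx1 : x < 1) :
    TT x = x/2 + Real.arcsin (Real.sqrt x) ^ 2 / 2
      - Real.sqrt (x - x ^ 2) * Real.arcsin (Real.sqrt x) := by
  set q : ℝ → ℝ := fun y => TT y - (y/2 + Real.arcsin (Real.sqrt y) ^ 2 / 2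
      - Real.sqrt (y - y ^ 2) * Real.arcsin (Real.sqrt y)) with hq
  have hq0 : ∀ y ∈ Set.Ioo (0:ℝ) 1, HasDerivAt q 0 y := by
    rintro y ⟨hy0, hy1⟩
    have hT := hasDerivAt_TT hy0 hy1
    have hDT : (∑' n, cc n * y ^ (n + 1)) = y * PP y := by
      rw [PP, ← tsum_mul_left]
      exact tsum_congr fun n => by rw [pow_succ']; ring
    rw [hDT] at hT
    have hw := hasDerivAt_w hy0 hy1
    have harc := hasDerivAt_arc hy0 hy1
    have h2 : HasDerivAt (fun y : ℝ => y / 2) (1/2 : ℝ) y := by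
      simpa using (hasDerivAt_id y).div_const 2
    have harcsq := (harc.pow 2).div_const 2
    have hwt := hw.mul harc
    have h := hT.sub ((h2.add harcsq).sub hwt)
    refine h.congr_deriv (Eq.symm ?_)
    have hwpos : 0 < Real.sqrt (y - y ^ 2) := Real.sqrt_pos.mpr (by nlinarith)
    have hw2 : Real.sqrt (y - y ^ 2) ^ 2 = y - y ^ 2 := Real.sq_sqrt (by nlinarith)
    have hP := P_eq hy0 hy1
    set w := Real.sqrt (y - y ^ 2)
    set t := Real.arcsin (Real.sqrt y)
    -- goal: 0 = y * PP y - (1/2 + (2 * t ^ 1 * (1/(2*w)))/2 - ((1-2*y)/(2*w) * t + w * (1/(2*w))))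
    field_simp
    linear_combination (-4*(y:ℝ)) * hP
  have hconst : ∀ ε ∈ Set.Ioc (0:ℝ) x, q ε = q x := by
    rintro ε ⟨hε0, hεx⟩
    have h := constant_of_has_deriv_right_zero
      (f := q) (a := ε) (b := x)
      (fun y hy => ((hq0 y ⟨lt_of_lt_of_le hε0 hy.1, lt_of_le_of_lt hy.2 hx1⟩).continuousAt).continuousWithinAt)
      (fun y hy => ((hq0 y ⟨lt_of_lt_of_le hε0 hy.1, lt_trans hy.2 hx1⟩).hasDerivWithinAt))
    exact (h x ⟨hεx, le_refl x⟩).symm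
  have hlim : Filter.Tendsto q (nhdsWithin 0 (Set.Ioi 0)) (nhds 0) := by
    have part1 : Filter.Tendsto TT (nhdsWithin 0 (Set.Ioi 0)) (nhds 0) := by
      have hg : Filter.Tendsto (fun y : ℝ => 2 * y ^ 2)
          (nhdsWithin 0 (Set.Ioi 0)) (nhds 0) := by
        have : Filter.Tendsto (fun y : ℝ => 2 * y ^ 2) (nhds 0) (nhds (2 * 0 ^ 2)) :=
          (continuous_const.mul (continuous_pow 2)).tendsto 0
        simpa using this.mono_left nhdsWithin_le_nhds
      refine squeeze_zero' ?_ ?_ hg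
      · filter_upwards [self_mem_nhdsWithin] with y hy
        exact TT_nonneg (le_of_lt hy)
      · filter_upwards [Ioc_mem_nhdsGT_of_mem
          (show (0:ℝ) ∈ Set.Ico (0:ℝ) (1/2:ℝ) from ⟨le_refl _, by norm_num⟩)] with y hy
        exact TT_le hy.1.le hy.2
    have part2 : Filter.Tendsto (fun y : ℝ => y/2 + Real.arcsin (Real.sqrt y) ^ 2 / 2
        - Real.sqrt (y - y ^ 2) * Real.arcsin (Real.sqrt y))
        (nhdsWithin 0 (Set.Ioi 0)) (nhds 0) := by
      have hc : Continuous (fun y : ℝ => y/2 + Real.arcsin (Real.sqrt y) ^ 2 / 2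
          - Real.sqrt (y - y ^ 2) * Real.arcsin (Real.sqrt y)) := by
        have c1 : Continuous fun y : ℝ => Real.arcsin (Real.sqrt y) :=
          Real.continuous_arcsin.comp Real.continuous_sqrt
        have c2 : Continuous fun y : ℝ => Real.sqrt (y - y ^ 2) :=
          Real.continuous_sqrt.comp (continuous_id.sub (continuous_pow 2))
        exact ((continuous_id.div_const 2).add ((c1.pow 2).div_const 2)).sub (c2.mul c1)
      have := hc.tendsto 0
      simp only [Real.sqrt_zero, Real.arcsin_zero] at this
      norm_num at this
      simpa using this.mono_left nhdsWithin_le_nhds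
    have := part1.sub part2
    simpa using this
  have hconst' : Filter.Tendsto q (nhdsWithin 0 (Set.Ioi 0)) (nhds (q x)) := by
    have hev : q =ᶠ[nhdsWithin 0 (Set.Ioi 0)] fun _ => q x := by
      filter_upwards [Ioc_mem_nhdsGT_of_mem
        (show (0:ℝ) ∈ Set.Ico (0:ℝ) x from ⟨le_refl _, hx0⟩)] with ε hε
      exact hconst ε hε
    exact (Filter.Tendsto.congr' hev.symm tendsto_const_nhds)
  have hq0' : q x = 0 := tendsto_nhds_unique hconst' hlim
  simp only [hq] at hq0'
  linarith [hq0']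

/-- For `0 < z < 1`,
`∑_{n=0}^∞ 4^n z^n/((2n+1)(n+1)(n+2)·C_n)
  = 1/(2z) + (1/(2z²))·arctan²(√(z/(1-z))) - arctan(√(z/(1-z)))/(z·√(z/(1-z)))`. -/
theorem integrated_sprugnoli (z : ℝ) (hz0 : 0 < z) (hz1 : z < 1) :
    ∑' n : ℕ, 4 ^ n * z ^ n
        / ((2 * (n : ℝ) + 1) * ((n : ℝ) + 1) * ((n : ℝ) + 2) * (catalan n : ℝ))
      = 1 / (2 * z) + 1 / (2 * z ^ 2) * Real.arctan (Real.sqrt (z / (1 - z))) ^ 2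
        - Real.arctan (Real.sqrt (z / (1 - z))) / (z * Real.sqrt (z / (1 - z))) := by
  have hterm : ∀ n : ℕ, 4 ^ n * z ^ n
      / ((2 * (n : ℝ) + 1) * ((n : ℝ) + 1) * ((n : ℝ) + 2) * (catalan n : ℝ))
      = cc n / ((n:ℝ) + 2) * z ^ n := by
    intro n
    have hcat : ((n:ℝ)+1) * (catalan n : ℝ) = (Nat.centralBinom n : ℝ) := by
      exact_mod_cast succ_mul_catalan_eq_centralBinom n
    have hcatpos : 0 < catalan n := by
      rcases Nat.eq_zero_or_pos (catalan n) with h | h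
      · exfalso
        have := succ_mul_catalan_eq_centralBinom n
        rw [h, mul_zero] at this
        exact (Nat.centralBinom_pos n).ne' this.symm
      · exact h
    have hcat0 : (0:ℝ) < (catalan n : ℝ) := by exact_mod_cast hcatpos
    have hcb0 : (0:ℝ) < (Nat.centralBinom n : ℝ) := by exact_mod_cast Nat.centralBinom_pos n
    have hn2 : (0:ℝ) < (n:ℝ) + 2 := by positivity
    have hn1 : (0:ℝ) < (n:ℝ) + 1 := by positivity
    have h2n : (0:ℝ) < 2*(n:ℝ) + 1 := by positivity
    rw [cc]
    have hden : (2 * (n : ℝ) + 1) * ((n : ℝ) + 1) * ((n : ℝ) + 2) * (catalan n : ℝ)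
        = ((2 * (n:ℝ) + 1) * (Nat.centralBinom n : ℝ)) * ((n:ℝ) + 2) := by
      rw [← hcat]; ring
    rw [hden]
    field_simp
  simp_rw [hterm]
  -- sum = TT z / z^2
  have hsum : TT z = z ^ 2 * ∑' n : ℕ, cc n / ((n:ℝ) + 2) * z ^ n := by
    rw [TT, ← tsum_mul_left]
    refine tsum_congr fun n => ?_
    rw [pow_add]
    ring
  have hz2 : (z:ℝ)^2 ≠ 0 := by positivity
  have hS : ∑' n : ℕ, cc n / ((n:ℝ) + 2) * z ^ n = TT z / z ^ 2 := by
    rw [hsum]; field_simp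
  rw [hS, T_eq hz0 hz1]
  -- arctan(√(z/(1-z))) = arcsin √z
  set t := Real.arcsin (Real.sqrt z) with ht
  have hs0 : 0 < Real.sqrt z := Real.sqrt_pos.mpr hz0
  have hc0 : 0 < Real.sqrt (1 - z) := Real.sqrt_pos.mpr (by linarith)
  have hs2 : Real.sqrt z ^ 2 = z := Real.sq_sqrt hz0.le
  have hc2 : Real.sqrt (1 - z) ^ 2 = 1 - z := Real.sq_sqrt (by linarith)
  have hs1 : Real.sqrt z < 1 := by nlinarith
  have harct : Real.arctan (Real.sqrt (z / (1 - z))) = t := by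
    rw [Real.sqrt_div hz0.le]
    rw [ht, Real.arcsin_eq_arctan ⟨by linarith, hs1⟩, hs2]
  rw [harct]
  have hw : Real.sqrt (z - z ^ 2) = Real.sqrt z * Real.sqrt (1 - z) := by
    rw [← Real.sqrt_mul hz0.le]
    ring_nf
  rw [hw]
  have hdiv : Real.sqrt (z / (1 - z)) = Real.sqrt z / Real.sqrt (1 - z) :=
    Real.sqrt_div hz0.le _
  rw [hdiv]
  have hc0' : (0:ℝ) < Real.sqrt (1 - Real.sqrt z ^ 2) := by rw [hs2]; exact hc0
  rw [show z = Real.sqrt z ^ 2 from hs2.symm]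
  field_simp
  rw [Real.sqrt_sq hs0.le]
  linear_combination (0:ℝ) * hs2
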